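/- arXiv:1007.0564 — 2 statements merged into one kernel-verified Lean document; each statement's English description precedes it below -/
import Mathlib

section
/- For every φ in the Schwartz space S(ℝ^d) and every n ∈ ℕ, the weighted sum of squared Hermite coefficients Σ_{β∈ℕ^d} (2|β|+d)^{2n} (∫_{ℝ^d} φ(x) h_β(x) dx)² is finite; that is, the sequence of Hermite coefficients of a Schwartz function is rapidly decreasing. -/
/-!
On Schwartz space let `aᵢ = ∂ᵢ + xᵢ/2`, `aᵢ* = xᵢ/2 - ∂ᵢ` and `N = d + 2 ∑ᵢ aᵢ* aᵢ`. From the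
three-term relations `x hₙ = √(n+1) hₙ₊₁ + √n hₙ₋₁` and `2 hₙ' = √n hₙ₋₁ - √(n+1) hₙ₊₁`, one
integration by parts shows that `aᵢ` and `aᵢ*` shift the Hermite coefficients by `±eᵢ`, so the
coefficients of `Nⁿ φ` are `(2|β| + d)ⁿ` times those of `φ`. The same relations make `(hₘ hₙ)'` a
combination of two products, whose vanishing integral gives the orthonormality of the `hₙ` (and of
the `h_β`, by Fubini). Bessel's inequality for the Schwartz function `Nⁿ φ` is then the claim.
-/

open MeasureTheory

noncomputable def hermitePoly (n : ℕ) (x : ℝ) : ℝ :=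
  (-1 : ℝ) ^ n * Real.exp (x ^ 2 / 2) *
    iteratedDeriv n (fun y : ℝ => Real.exp (-(y ^ 2 / 2))) x

noncomputable def hermiteFun (n : ℕ) (x : ℝ) : ℝ :=
  (Real.sqrt (Real.sqrt (2 * Real.pi) * n.factorial))⁻¹ *
    Real.exp (-(x ^ 2 / 4)) * hermitePoly n x

noncomputable def hermiteFunMulti (d : ℕ) (α : Fin d → ℕ) (x : EuclideanSpace ℝ (Fin d)) : ℝ :=
  ∏ i, hermiteFun (α i) (x i)

noncomputable def hermCoeff (d : ℕ) (f : EuclideanSpace ℝ (Fin d) → ℝ) (β : Fin d → ℕ) : ℝ :=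
  ∫ x, f x * hermiteFunMulti d β x

open Polynomial Real

theorem Polynomial.derivative_hermite_succ (n : ℕ) :
    derivative (hermite (n + 1)) = (n + 1 : ℤ[X]) * hermite n := by
  induction n with
  | zero => simp [hermite_zero]
  | succ n ih =>
    rw [hermite_succ (n + 1), derivative_sub, derivative_mul, derivative_X, one_mul, ih,
      derivative_mul, hermite_succ n]
    push_cast
    simp only [derivative_add, derivative_natCast, derivative_one]
    ring

theorem hermitePoly_eq_aeval (n : ℕ) (x : ℝ) : hermitePoly n x = aeval x (hermite n) := by
  rw [hermitePoly, iteratedDeriv_eq_iterate, deriv_gaussian_eq_hermite_mul_gaussian,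
    ← mul_assoc, mul_mul_mul_comm, ← pow_add, ← two_mul, pow_mul, neg_one_sq, one_pow, one_mul,
    mul_right_comm, ← exp_add, add_neg_cancel, exp_zero, one_mul]

theorem aeval_hermite_succ (n : ℕ) (x : ℝ) :
    aeval x (hermite (n + 1)) = x * aeval x (hermite n) - n * aeval x (hermite (n - 1)) := by
  cases n with
  | zero => simp [hermite_succ, hermite_zero]
  | succ n =>
    rw [hermite_succ (n + 1), derivative_hermite_succ, Nat.add_sub_cancel]
    simp

noncomputable def hermiteFunNorm (n : ℕ) : ℝ := (√(√(2 * π) * n.factorial))⁻¹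

theorem hermiteFunNorm_eq_sqrt_mul_succ (n : ℕ) :
    hermiteFunNorm n = √(n + 1) * hermiteFunNorm (n + 1) := by
  have hsqrt : √(√(2 * π) * (n + 1).factorial) = √(n + 1) * √(√(2 * π) * n.factorial) := by
    rw [← sqrt_mul (by positivity), Nat.factorial_succ, Nat.cast_mul, Nat.cast_succ]
    ring_nf
  rw [hermiteFunNorm, hermiteFunNorm, hsqrt, mul_inv, ← mul_assoc,
    mul_inv_cancel₀ (by positivity), one_mul]

theorem natCast_mul_hermiteFunNorm (n : ℕ) :
    n * hermiteFunNorm n = √n * hermiteFunNorm (n - 1) := by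
  cases n with
  | zero => simp
  | succ n =>
    rw [Nat.add_sub_cancel, hermiteFunNorm_eq_sqrt_mul_succ n, ← mul_assoc, Nat.cast_succ,
      mul_self_sqrt (by positivity)]

theorem hermiteFun_eq (n : ℕ) (x : ℝ) :
    hermiteFun n x = hermiteFunNorm n * aeval x (hermite n) * exp (-(x ^ 2 / 4)) := by
  rw [hermiteFun, hermitePoly_eq_aeval, hermiteFunNorm]
  ring

theorem mul_hermiteFun (n : ℕ) (x : ℝ) :
    x * hermiteFun n x = √(n + 1) * hermiteFun (n + 1) x + √n * hermiteFun (n - 1) x := by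
  simp only [hermiteFun_eq, aeval_hermite_succ]
  linear_combination (x * aeval x (hermite n) - n * aeval x (hermite (n - 1)))
    * exp (-(x ^ 2 / 4)) * hermiteFunNorm_eq_sqrt_mul_succ n
    + aeval x (hermite (n - 1)) * exp (-(x ^ 2 / 4)) * natCast_mul_hermiteFunNorm n

theorem aeval_derivative_hermite (n : ℕ) (x : ℝ) :
    aeval x (derivative (hermite n)) = n * aeval x (hermite (n - 1)) := by
  cases n with
  | zero => simp [hermite_zero]
  | succ n =>
    rw [derivative_hermite_succ, Nat.add_sub_cancel]
    simp

theorem hasDerivAt_hermiteFun (n : ℕ) (x : ℝ) :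
    HasDerivAt (hermiteFun n)
      ((√n * hermiteFun (n - 1) x - √(n + 1) * hermiteFun (n + 1) x) / 2) x := by
  have hexponent : HasDerivAt (fun y : ℝ => -(y ^ 2 / 4)) (-(x / 2)) x :=
    ((hasDerivAt_pow 2 x).div_const 4).neg.congr_deriv (by ring)
  have hmul : HasDerivAt (fun y => hermiteFunNorm n * aeval y (hermite n) * exp (-(y ^ 2 / 4)))
      (hermiteFunNorm n * aeval x (derivative (hermite n)) * exp (-(x ^ 2 / 4))
        + hermiteFunNorm n * aeval x (hermite n) * (exp (-(x ^ 2 / 4)) * -(x / 2))) x :=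
    ((Polynomial.hasDerivAt_aeval (hermite n) x).const_mul (hermiteFunNorm n)).mul hexponent.exp
  rw [funext (hermiteFun_eq n)]
  refine hmul.congr_deriv ?_
  rw [aeval_derivative_hermite]
  have hx := mul_hermiteFun n x
  simp only [hermiteFun_eq] at hx ⊢
  linear_combination (-1 / 2 : ℝ) * hx + (aeval x (hermite (n - 1)) * exp (-(x ^ 2 / 4)))
    * natCast_mul_hermiteFunNorm n

theorem continuous_hermiteFun (n : ℕ) : Continuous (hermiteFun n) :=
  continuous_iff_continuousAt.2 fun x => (hasDerivAt_hermiteFun n x).continuousAt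

theorem integrable_aeval_mul_exp_neg_mul_sq (p : ℤ[X]) {b : ℝ} (hb : 0 < b) :
    Integrable fun x : ℝ => aeval x p * exp (-b * x ^ 2) := by
  induction p using Polynomial.induction_on' with
  | add p q hp hq => exact (hp.add hq).congr (ae_of_all _ fun x => by simp [add_mul])
  | monomial k a =>
    have hk := integrable_rpow_mul_exp_neg_mul_sq hb (s := k) (by linarith [k.cast_nonneg (α := ℝ)])
    simpa [Real.rpow_natCast, mul_assoc] using hk.const_mul (a : ℝ)

theorem integrable_hermiteFun (n : ℕ) : Integrable (hermiteFun n) := by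
  have h := (integrable_aeval_mul_exp_neg_mul_sq (hermite n) (b := 1 / 4) (by norm_num)).const_mul
    (hermiteFunNorm n)
  refine h.congr (ae_of_all _ fun x => ?_)
  rw [hermiteFun_eq]
  ring_nf

theorem integrable_hermiteFun_mul (m n : ℕ) :
    Integrable fun x => hermiteFun m x * hermiteFun n x := by
  have h := (integrable_aeval_mul_exp_neg_mul_sq (hermite m * hermite n) (b := 1 / 2)
    (by norm_num)).const_mul (hermiteFunNorm m * hermiteFunNorm n)
  refine h.congr (ae_of_all _ fun x => ?_)
  simp only [hermiteFun_eq, map_mul]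
  rw [show -(1 / 2) * x ^ 2 = -(x ^ 2 / 4) + -(x ^ 2 / 4) by ring, exp_add]
  ring

theorem hasDerivAt_hermiteFun_mul (m n : ℕ) (x : ℝ) :
    HasDerivAt (fun y => hermiteFun m y * hermiteFun n y)
      (√m * (hermiteFun (m - 1) x * hermiteFun n x)
        - √(n + 1) * (hermiteFun m x * hermiteFun (n + 1) x)) x := by
  refine ((hasDerivAt_hermiteFun m x).mul (hasDerivAt_hermiteFun n x)).congr_deriv ?_
  linear_combination (hermiteFun n x / 2) * mul_hermiteFun m x
    - (hermiteFun m x / 2) * mul_hermiteFun n x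

theorem sqrt_succ_mul_integral_hermiteFun_mul_succ (m n : ℕ) :
    √(n + 1) * ∫ x, hermiteFun m x * hermiteFun (n + 1) x
      = √m * ∫ x, hermiteFun (m - 1) x * hermiteFun n x := by
  have h := integral_eq_zero_of_hasDerivAt_of_integrable (hasDerivAt_hermiteFun_mul m n)
    (((integrable_hermiteFun_mul _ _).const_mul _).sub
      ((integrable_hermiteFun_mul _ _).const_mul _))
    (integrable_hermiteFun_mul m n)
  rw [integral_sub ((integrable_hermiteFun_mul _ _).const_mul _)
    ((integrable_hermiteFun_mul _ _).const_mul _), integral_const_mul, integral_const_mul] at h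
  linarith

theorem integral_hermiteFun_zero_mul_self : ∫ x, hermiteFun 0 x * hermiteFun 0 x = 1 := by
  have hnorm : hermiteFunNorm 0 * hermiteFunNorm 0 = (√(2 * π))⁻¹ := by
    rw [hermiteFunNorm, ← mul_inv, Nat.factorial_zero, Nat.cast_one, mul_one,
      mul_self_sqrt (sqrt_nonneg _)]
  have hpoint (x : ℝ) :
      hermiteFun 0 x * hermiteFun 0 x = (√(2 * π))⁻¹ * exp (-(1 / 2) * x ^ 2) := by
    rw [hermiteFun_eq, hermite_zero, ← hnorm,
      show -(1 / 2) * x ^ 2 = -(x ^ 2 / 4) + -(x ^ 2 / 4) by ring, exp_add]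
    simp only [map_one]
    ring
  simp_rw [hpoint]
  rw [integral_const_mul, integral_gaussian, show π / (1 / 2) = 2 * π by ring]
  exact inv_mul_cancel₀ (by positivity)

theorem integral_hermiteFun_mul (m n : ℕ) :
    ∫ x, hermiteFun m x * hermiteFun n x = if m = n then 1 else 0 := by
  induction n generalizing m with
  | zero =>
    cases m with
    | zero => simpa using integral_hermiteFun_zero_mul_self
    | succ m =>
      have h := sqrt_succ_mul_integral_hermiteFun_mul_succ 0 m
      rw [Nat.cast_zero, sqrt_zero, zero_mul] at h
      rw [if_neg m.succ_ne_zero]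
      exact (integral_congr_ae (ae_of_all _ fun x => mul_comm _ _)).trans
        ((mul_eq_zero.1 h).resolve_left (sqrt_pos.2 m.cast_add_one_pos).ne')
  | succ n ih =>
    have h := sqrt_succ_mul_integral_hermiteFun_mul_succ m n
    have hn : √((n : ℝ) + 1) ≠ 0 := (sqrt_pos.2 n.cast_add_one_pos).ne'
    rw [ih] at h
    cases m with
    | zero => simpa [hn] using h
    | succ m =>
      simp only [Nat.add_sub_cancel, Nat.cast_succ, Nat.add_right_cancel_iff] at h ⊢
      split_ifs at h ⊢ with hmn
      · subst hmn
        exact mul_left_cancel₀ hn h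
      · simpa [hn] using h

section EuclideanSpace

variable {ι : Type*} [Fintype ι]

theorem EuclideanSpace.integral_fintype_prod_eq_prod (f : ι → ℝ → ℝ) :
    ∫ x : EuclideanSpace ℝ ι, ∏ i, f i (x i) = ∏ i, ∫ t, f i t := by
  rw [← (EuclideanSpace.volume_preserving_symm_measurableEquiv_toLp ι).symm.integral_comp']
  exact MeasureTheory.integral_fintype_prod_eq_prod f

theorem EuclideanSpace.integrable_fintype_prod {f : ι → ℝ → ℝ} (hf : ∀ i, Integrable (f i)) :
    Integrable fun x : EuclideanSpace ℝ ι => ∏ i, f i (x i) := by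
  rw [← (EuclideanSpace.volume_preserving_symm_measurableEquiv_toLp ι).symm.integrable_comp_emb
    (MeasurableEquiv.measurableEmbedding _)]
  exact Integrable.fintype_prod hf

end EuclideanSpace

section HermiteFunMulti

variable {d : ℕ}

theorem hermiteFunMulti_eq_mul_prod_erase {α β : Fin d → ℕ} {i : Fin d}
    (hαβ : ∀ j, j ≠ i → α j = β j) (x : EuclideanSpace ℝ (Fin d)) :
    hermiteFunMulti d α x
      = hermiteFun (α i) (x i) * ∏ j ∈ Finset.univ.erase i, hermiteFun (β j) (x j) := by
  rw [hermiteFunMulti, ← Finset.mul_prod_erase _ _ (Finset.mem_univ i)]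
  congr 1
  exact Finset.prod_congr rfl fun j hj => by rw [hαβ j (Finset.ne_of_mem_erase hj)]

theorem mul_hermiteFunMulti (β : Fin d → ℕ) (i : Fin d) (x : EuclideanSpace ℝ (Fin d)) :
    x i * hermiteFunMulti d β x
      = √(β i + 1) * hermiteFunMulti d (β + Pi.single i 1) x
        + √(β i) * hermiteFunMulti d (β - Pi.single i 1) x := by
  have hβ : ∀ j, j ≠ i → β j = β j := fun _ _ => rfl
  have hadd : ∀ j, j ≠ i → (β + Pi.single i 1 : Fin d → ℕ) j = β j := fun j hj => by simp [hj]
  have hsub : ∀ j, j ≠ i → (β - Pi.single i 1 : Fin d → ℕ) j = β j := fun j hj => by simp [hj]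
  rw [hermiteFunMulti_eq_mul_prod_erase hβ, hermiteFunMulti_eq_mul_prod_erase hadd,
    hermiteFunMulti_eq_mul_prod_erase hsub, ← mul_assoc, mul_hermiteFun]
  simp only [Pi.add_apply, Pi.sub_apply, Pi.single_eq_same]
  ring

theorem hasLineDerivAt_hermiteFunMulti (β : Fin d → ℕ) (i : Fin d)
    (x : EuclideanSpace ℝ (Fin d)) :
    HasLineDerivAt ℝ (hermiteFunMulti d β)
      ((√(β i) * hermiteFunMulti d (β - Pi.single i 1) x
        - √(β i + 1) * hermiteFunMulti d (β + Pi.single i 1) x) / 2) x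
      (EuclideanSpace.single i 1) := by
  set rest := ∏ j ∈ Finset.univ.erase i, hermiteFun (β j) (x j)
  have hline : (fun t : ℝ => hermiteFunMulti d β (x + t • EuclideanSpace.single i 1))
      = fun t => hermiteFun (β i) (x i + t) * rest := by
    funext t
    rw [hermiteFunMulti, ← Finset.mul_prod_erase _ _ (Finset.mem_univ i)]
    congr 1
    · simp
    · exact Finset.prod_congr rfl fun j hj => by simp [Finset.ne_of_mem_erase hj]
  have hadd : ∀ j, j ≠ i → (β + Pi.single i 1 : Fin d → ℕ) j = β j := fun j hj => by simp [hj]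
  have hsub : ∀ j, j ≠ i → (β - Pi.single i 1 : Fin d → ℕ) j = β j := fun j hj => by simp [hj]
  rw [HasLineDerivAt, hline, hermiteFunMulti_eq_mul_prod_erase hadd,
    hermiteFunMulti_eq_mul_prod_erase hsub]
  have hshift := HasDerivAt.comp_const_add (x i) 0
    (by simpa only [add_zero] using hasDerivAt_hermiteFun (β i) (x i))
  refine (hshift.mul_const rest).congr_deriv ?_
  simp only [Pi.add_apply, Pi.sub_apply, Pi.single_eq_same]
  ring

theorem continuous_hermiteFunMulti (β : Fin d → ℕ) : Continuous (hermiteFunMulti d β) :=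
  continuous_finsetProd _ fun i _ =>
    (continuous_hermiteFun (β i)).comp (EuclideanSpace.proj (𝕜 := ℝ) i).continuous

theorem integrable_hermiteFunMulti (β : Fin d → ℕ) : Integrable (hermiteFunMulti d β) :=
  EuclideanSpace.integrable_fintype_prod fun i => integrable_hermiteFun (β i)

theorem integral_hermiteFunMulti_mul (α β : Fin d → ℕ) :
    ∫ x, hermiteFunMulti d α x * hermiteFunMulti d β x = if α = β then 1 else 0 := by
  simp_rw [hermiteFunMulti, ← Finset.prod_mul_distrib]
  rw [EuclideanSpace.integral_fintype_prod_eq_prod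
    (fun i t => hermiteFun (α i) t * hermiteFun (β i) t)]
  simp_rw [integral_hermiteFun_mul, Fintype.prod_boole, ← funext_iff]

theorem memLp_hermiteFunMulti (β : Fin d → ℕ) : MemLp (hermiteFunMulti d β) 2 := by
  refine (memLp_two_iff_integrable_sq (continuous_hermiteFunMulti β).aestronglyMeasurable).2 ?_
  simp_rw [sq, hermiteFunMulti, ← Finset.prod_mul_distrib]
  exact EuclideanSpace.integrable_fintype_prod fun i => integrable_hermiteFun_mul (β i) (β i)

end HermiteFunMulti

open scoped SchwartzMap

theorem SchwartzMap.integrable_mul_of_integrable {E : Type*} [NormedAddCommGroup E]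
    [NormedSpace ℝ E] [MeasurableSpace E] [OpensMeasurableSpace E] {μ : Measure E}
    (ψ : 𝓢(E, ℝ)) {g : E → ℝ} (hg : Integrable g μ) : Integrable (fun x => ψ x * g x) μ :=
  hg.bdd_mul ψ.continuous.aestronglyMeasurable (ae_of_all _ (SchwartzMap.norm_le_seminorm ℝ ψ))

section HermCoeff

variable {d : ℕ}

theorem integrable_schwartz_mul_hermiteFunMulti (ψ : 𝓢(EuclideanSpace ℝ (Fin d), ℝ))
    (β : Fin d → ℕ) : Integrable fun x => ψ x * hermiteFunMulti d β x :=
  ψ.integrable_mul_of_integrable (integrable_hermiteFunMulti β)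

variable (d) in
noncomputable def hermCoeffLinearMap (β : Fin d → ℕ) :
    𝓢(EuclideanSpace ℝ (Fin d), ℝ) →ₗ[ℝ] ℝ where
  toFun ψ := hermCoeff d ψ β
  map_add' ψ χ := by
    simp only [hermCoeff, add_apply, add_mul]
    exact integral_add (integrable_schwartz_mul_hermiteFunMulti ψ β)
      (integrable_schwartz_mul_hermiteFunMulti χ β)
  map_smul' c ψ := by
    simp only [hermCoeff, smul_apply, smul_eq_mul, mul_assoc, integral_const_mul,
      RingHom.id_apply]

theorem hermCoeffLinearMap_apply (β : Fin d → ℕ) (ψ : 𝓢(EuclideanSpace ℝ (Fin d), ℝ)) :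
    hermCoeffLinearMap d β ψ = hermCoeff d ψ β := rfl

variable (d) in
noncomputable def coordMulCLM (i : Fin d) :
    𝓢(EuclideanSpace ℝ (Fin d), ℝ) →L[ℝ] 𝓢(EuclideanSpace ℝ (Fin d), ℝ) :=
  SchwartzMap.smulLeftCLM ℝ fun x : EuclideanSpace ℝ (Fin d) => x i

theorem coordMulCLM_apply (i : Fin d) (ψ : 𝓢(EuclideanSpace ℝ (Fin d), ℝ))
    (x : EuclideanSpace ℝ (Fin d)) : coordMulCLM d i ψ x = x i * ψ x :=
  SchwartzMap.smulLeftCLM_apply_apply (EuclideanSpace.proj i).hasTemperateGrowth ψ x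

theorem integrable_schwartz_mul_add_hermiteFunMulti (ψ : 𝓢(EuclideanSpace ℝ (Fin d), ℝ))
    (a b : ℝ) (α β : Fin d → ℕ) :
    Integrable fun x => ψ x * (a * hermiteFunMulti d α x + b * hermiteFunMulti d β x) := by
  simp only [mul_add, mul_left_comm (ψ _)]
  exact ((integrable_schwartz_mul_hermiteFunMulti ψ _).const_mul _).add
    ((integrable_schwartz_mul_hermiteFunMulti ψ _).const_mul _)

theorem integral_schwartz_mul_add_hermiteFunMulti (ψ : 𝓢(EuclideanSpace ℝ (Fin d), ℝ))
    (a b : ℝ) (α β : Fin d → ℕ) :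
    ∫ x, ψ x * (a * hermiteFunMulti d α x + b * hermiteFunMulti d β x)
      = a * hermCoeff d ψ α + b * hermCoeff d ψ β := by
  simp only [hermCoeff, mul_add, mul_left_comm (ψ _)]
  rw [integral_add ((integrable_schwartz_mul_hermiteFunMulti ψ _).const_mul _)
    ((integrable_schwartz_mul_hermiteFunMulti ψ _).const_mul _), integral_const_mul,
    integral_const_mul]

theorem hermCoeff_coordMulCLM (i : Fin d) (ψ : 𝓢(EuclideanSpace ℝ (Fin d), ℝ))
    (β : Fin d → ℕ) :
    hermCoeff d (coordMulCLM d i ψ) β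
      = √(β i + 1) * hermCoeff d ψ (β + Pi.single i 1)
        + √(β i) * hermCoeff d ψ (β - Pi.single i 1) := by
  simp only [hermCoeff, coordMulCLM_apply, mul_assoc, mul_left_comm _ (ψ _), mul_hermiteFunMulti]
  exact integral_schwartz_mul_add_hermiteFunMulti ψ _ _ _ _

variable (d) in
noncomputable def partialDerivCLM (i : Fin d) :
    𝓢(EuclideanSpace ℝ (Fin d), ℝ) →L[ℝ] 𝓢(EuclideanSpace ℝ (Fin d), ℝ) :=
  LineDeriv.lineDerivOpCLM ℝ _ (EuclideanSpace.single i (1 : ℝ))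

theorem hasLineDerivAt_partialDerivCLM (i : Fin d) (ψ : 𝓢(EuclideanSpace ℝ (Fin d), ℝ))
    (x : EuclideanSpace ℝ (Fin d)) :
    HasLineDerivAt ℝ ψ (partialDerivCLM d i ψ x) x (EuclideanSpace.single i 1) := by
  simpa only [partialDerivCLM, LineDeriv.lineDerivOpCLM_apply,
    SchwartzMap.lineDerivOp_apply_eq_fderiv] using (ψ.hasFDerivAt x).hasLineDerivAt _

theorem hermCoeff_partialDerivCLM (i : Fin d) (ψ : 𝓢(EuclideanSpace ℝ (Fin d), ℝ))
    (β : Fin d → ℕ) :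
    hermCoeff d (partialDerivCLM d i ψ) β
      = (√(β i + 1) * hermCoeff d ψ (β + Pi.single i 1)
        - √(β i) * hermCoeff d ψ (β - Pi.single i 1)) / 2 := by
  have hderiv (x : EuclideanSpace ℝ (Fin d)) : HasLineDerivAt ℝ (hermiteFunMulti d β)
      (√(β i) / 2 * hermiteFunMulti d (β - Pi.single i 1) x
        + -(√(β i + 1) / 2) * hermiteFunMulti d (β + Pi.single i 1) x) x
      (EuclideanSpace.single i 1) :=
    (hasLineDerivAt_hermiteFunMulti β i x).congr_deriv (by ring)
  have hibp := integral_bilinear_hasLineDerivAt_right_eq_neg_left_of_integrable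
    (B := ContinuousLinearMap.mul ℝ ℝ) (μ := volume)
    (integrable_schwartz_mul_hermiteFunMulti (partialDerivCLM d i ψ) β)
    (integrable_schwartz_mul_add_hermiteFunMulti ψ _ _ _ _)
    (integrable_schwartz_mul_hermiteFunMulti ψ β)
    (fun x _ => hasLineDerivAt_partialDerivCLM i ψ x) (fun x _ => hderiv x)
  simp only [ContinuousLinearMap.mul_apply', integral_schwartz_mul_add_hermiteFunMulti] at hibp
  rw [hermCoeff]
  linarith

end HermCoeff

section LadderOperators

variable {d : ℕ}

variable (d) in
noncomputable def annihilationCLM (i : Fin d) :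
    𝓢(EuclideanSpace ℝ (Fin d), ℝ) →L[ℝ] 𝓢(EuclideanSpace ℝ (Fin d), ℝ) :=
  partialDerivCLM d i + (1 / 2 : ℝ) • coordMulCLM d i

variable (d) in
noncomputable def creationCLM (i : Fin d) :
    𝓢(EuclideanSpace ℝ (Fin d), ℝ) →L[ℝ] 𝓢(EuclideanSpace ℝ (Fin d), ℝ) :=
  (1 / 2 : ℝ) • coordMulCLM d i - partialDerivCLM d i

variable (d) in
noncomputable def numberCLM :
    𝓢(EuclideanSpace ℝ (Fin d), ℝ) →L[ℝ] 𝓢(EuclideanSpace ℝ (Fin d), ℝ) :=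
  (d : ℝ) • 1 + (2 : ℝ) • ∑ i, creationCLM d i * annihilationCLM d i

theorem hermCoeff_annihilationCLM (i : Fin d) (ψ : 𝓢(EuclideanSpace ℝ (Fin d), ℝ))
    (β : Fin d → ℕ) :
    hermCoeff d (annihilationCLM d i ψ) β = √(β i + 1) * hermCoeff d ψ (β + Pi.single i 1) := by
  rw [← hermCoeffLinearMap_apply, annihilationCLM, add_apply, smul_apply, map_add, map_smul,
    hermCoeffLinearMap_apply, hermCoeffLinearMap_apply, hermCoeff_partialDerivCLM,
    hermCoeff_coordMulCLM, smul_eq_mul]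
  ring

theorem hermCoeff_creationCLM (i : Fin d) (ψ : 𝓢(EuclideanSpace ℝ (Fin d), ℝ))
    (β : Fin d → ℕ) :
    hermCoeff d (creationCLM d i ψ) β = √(β i) * hermCoeff d ψ (β - Pi.single i 1) := by
  rw [← hermCoeffLinearMap_apply, creationCLM, sub_apply, smul_apply, map_sub, map_smul,
    hermCoeffLinearMap_apply, hermCoeffLinearMap_apply, hermCoeff_partialDerivCLM,
    hermCoeff_coordMulCLM, smul_eq_mul]
  ring

theorem hermCoeff_creationCLM_annihilationCLM (i : Fin d) (ψ : 𝓢(EuclideanSpace ℝ (Fin d), ℝ))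
    (β : Fin d → ℕ) :
    hermCoeff d (creationCLM d i (annihilationCLM d i ψ)) β = β i * hermCoeff d ψ β := by
  rw [hermCoeff_creationCLM, hermCoeff_annihilationCLM]
  rcases Nat.eq_zero_or_pos (β i) with hβ | hβ
  · simp [hβ]
  have hcoord : ((β - Pi.single i 1 : Fin d → ℕ) i : ℝ) + 1 = β i := by
    rw [Pi.sub_apply, Pi.single_eq_same]
    exact_mod_cast Nat.sub_add_cancel hβ
  have hindex : β - Pi.single i 1 + Pi.single i 1 = β := by
    ext j
    rcases eq_or_ne j i with rfl | hj
    · simp only [Pi.add_apply, Pi.sub_apply, Pi.single_eq_same]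
      omega
    · simp [hj]
  rw [hcoord, hindex, ← mul_assoc, mul_self_sqrt (Nat.cast_nonneg _)]

theorem hermCoeff_numberCLM (ψ : 𝓢(EuclideanSpace ℝ (Fin d), ℝ)) (β : Fin d → ℕ) :
    hermCoeff d (numberCLM d ψ) β = (((2 * ∑ i, β i) + d : ℕ) : ℝ) * hermCoeff d ψ β := by
  simp only [← hermCoeffLinearMap_apply, numberCLM, add_apply, smul_apply, one_apply_eq_self,
    sum_apply, mul_apply_eq_comp, map_add, map_smul, map_sum]
  simp only [hermCoeffLinearMap_apply, hermCoeff_creationCLM_annihilationCLM, smul_eq_mul,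
    ← Finset.sum_mul]
  push_cast
  ring

theorem hermCoeff_numberCLM_pow (n : ℕ) (ψ : 𝓢(EuclideanSpace ℝ (Fin d), ℝ)) (β : Fin d → ℕ) :
    hermCoeff d ((numberCLM d ^ n) ψ) β
      = (((2 * ∑ i, β i) + d : ℕ) : ℝ) ^ n * hermCoeff d ψ β := by
  induction n with
  | zero => simp
  | succ n ih =>
    rw [pow_succ', mul_apply_eq_comp, hermCoeff_numberCLM, ih, pow_succ', mul_assoc]

end LadderOperators

theorem MeasureTheory.MemLp.inner_toLp_toLp {α : Type*} [MeasurableSpace α] {μ : Measure α}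
    {f g : α → ℝ} (hf : MemLp f 2 μ) (hg : MemLp g 2 μ) :
    inner ℝ (hf.toLp f) (hg.toLp g) = ∫ x, f x * g x ∂μ := by
  rw [L2.inner_def]
  refine integral_congr_ae ?_
  filter_upwards [hf.coeFn_toLp, hg.coeFn_toLp] with x hfx hgx
  rw [hfx, hgx, RCLike.inner_apply', conj_trivial]

section HermiteL2

variable {d : ℕ}

variable (d) in
noncomputable def hermiteL2 (β : Fin d → ℕ) :
    Lp ℝ 2 (volume : Measure (EuclideanSpace ℝ (Fin d))) :=
  (memLp_hermiteFunMulti β).toLp _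

theorem orthonormal_hermiteL2 : Orthonormal ℝ (hermiteL2 d) :=
  orthonormal_iff_ite.2 fun α β => by
    rw [hermiteL2, hermiteL2, MemLp.inner_toLp_toLp, integral_hermiteFunMulti_mul]

theorem inner_hermiteL2_toLp (β : Fin d → ℕ) (ψ : 𝓢(EuclideanSpace ℝ (Fin d), ℝ)) :
    inner ℝ (hermiteL2 d β) (ψ.toLp 2) = hermCoeff d ψ β := by
  rw [hermiteL2, SchwartzMap.toLp, MemLp.inner_toLp_toLp, hermCoeff]
  exact integral_congr_ae (ae_of_all _ fun _ => mul_comm _ _)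

end HermiteL2

/-- The Hermite coefficients of a Schwartz function are rapidly decreasing:
for every `n`, `Σ_β (2|β|+d)^{2n} (∫ φ h_β)² < ∞`. -/
theorem schwartz_hermite_coeff_rapidly_decreasing (d : ℕ)
    (φ : SchwartzMap (EuclideanSpace ℝ (Fin d)) ℝ) (n : ℕ) :
    Summable (fun β : Fin d → ℕ =>
      (((2 * ∑ i, β i) + d : ℕ) : ℝ) ^ (2 * n) *
        hermCoeff d (fun z => φ z) β ^ 2) := by
  refine (orthonormal_hermiteL2.inner_products_summable
    (((numberCLM d ^ n) φ).toLp 2 volume)).congr fun β => ?_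
  rw [inner_hermiteL2_toLp, hermCoeff_numberCLM_pow, Real.norm_eq_abs, sq_abs, pow_mul]
  ring
end

section
/- Let f be in the Schwartz space S(ℝ^d) and for t ∈ (0, ∞) and x ∈ ℝ^d define u(t, x) := ∫_{ℝ^d} f(x + y) (2πt)^{−d/2} e^{−|y|²/(2t)} dy, with u(0, x) := f(x). Then for each t > 0 the function u(t, ·) is a Schwartz function, u is differentiable in t on (0, ∞) with ∂_t u(t, x) = (1/2) Δ u(t, x) for all t > 0 and x ∈ ℝ^d (where Δ is the Laplacian in x), and u(t, x) → f(x) as t → 0⁺ for every x ∈ ℝ^d. (This is the representative-level solution u(t,·) = 𝔼(τ_{B_t} f) of the heat Cauchy problem u_t = (1/2)Δu, u_0 = f.) -/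
open MeasureTheory

noncomputable def pderiv1 (d : ℕ) (i : Fin d) (f : EuclideanSpace ℝ (Fin d) → ℝ) :
    EuclideanSpace ℝ (Fin d) → ℝ :=
  fun x => fderiv ℝ f x (EuclideanSpace.single i 1)

noncomputable def multiDeriv (d : ℕ) (β : Fin d → ℕ) (f : EuclideanSpace ℝ (Fin d) → ℝ) :
    EuclideanSpace ℝ (Fin d) → ℝ :=
  (List.finRange d).foldr (fun i g => (pderiv1 d i)^[β i] g) f

/-!
For `t > 0` the heat kernel `K_t` is a multiple of a Gaussian, hence a Schwartz function, and,
`K_t` being even, `u(t, ·) = f ⋆ K_t`. A convolution of two Schwartz functions is Schwartz.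
Spatial derivatives of `f ⋆ K_t` fall on the kernel (dominated by `|f| · sup ‖DK_t‖`), so
`Δu(t, ·) = f ⋆ ΔK_t`; the time derivative falls on the kernel as well, and an explicit
computation shows `∂_t K_t = ½ ΔK_t`. Finally `K_t(y) = t^{-d/2} K_1(y / √t)` is an approximate
identity as `t → 0⁺`, so `u(t, x) → f(x)` wherever `f` is continuous.
-/

open Real Module Filter Topology ContinuousLinearMap
open scoped Nat SchwartzMap Laplacian LineDeriv Convolution

lemma one_add_mul_exp_neg_mul_sq_le {a r : ℝ} (ha : 0 < a) (hr : 0 ≤ r) :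
    (1 + r) * exp (-(a * r ^ 2)) ≤ 2 + 1 / a := by
  have hpos : 0 < 1 + a * r ^ 2 := by positivity
  have hexp : exp (-(a * r ^ 2)) ≤ 1 / (1 + a * r ^ 2) := by
    rw [exp_neg, one_div]
    exact inv_anti₀ hpos (by linarith [add_one_le_exp (a * r ^ 2)])
  have hr' : 1 + r ≤ (2 + 1 / a) * (1 + a * r ^ 2) := by
    -- AM-GM: `r ≤ a r² + 1 / (4a)`
    have hsq : a * (r - 1 / (2 * a)) ^ 2 = a * r ^ 2 - r + 1 / a / 4 := by field_simp; ring
    have h1a : 0 ≤ 1 / a := by positivity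
    nlinarith [mul_nonneg ha.le (sq_nonneg (r - 1 / (2 * a))),
      mul_nonneg h1a (mul_nonneg ha.le (sq_nonneg r))]
  calc (1 + r) * exp (-(a * r ^ 2)) ≤ (1 + r) * (1 / (1 + a * r ^ 2)) := by gcongr
    _ ≤ 2 + 1 / a := by rw [mul_one_div, div_le_iff₀ hpos]; exact hr'

lemma one_add_pow_mul_exp_neg_mul_sq_le {a r : ℝ} (ha : 0 < a) (hr : 0 ≤ r) (m : ℕ) :
    (1 + r) ^ m * exp (-(a * r ^ 2)) ≤ (2 + m / a) ^ m := by
  rcases Nat.eq_zero_or_pos m with rfl | hm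
  · simpa using (exp_le_one_iff.2 (by nlinarith [sq_nonneg r]) : exp (-(a * r ^ 2)) ≤ 1)
  have hsplit : exp (-(a * r ^ 2)) = exp (-(a / m * r ^ 2)) ^ m := by
    rw [← exp_nat_mul]; congr 1; field_simp
  rw [hsplit, ← mul_pow]
  gcongr
  simpa only [one_div_div] using one_add_mul_exp_neg_mul_sq_le (a := a / m) (by positivity) hr

lemma Real.norm_iteratedFDeriv_exp (n : ℕ) (y : ℝ) : ‖iteratedFDeriv ℝ n exp y‖ = exp y := by
  rw [norm_iteratedFDeriv_eq_norm_iteratedDeriv, iteratedDeriv_eq_iterate, iter_deriv_exp,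
    norm_of_nonneg (exp_pos y).le]

section Gaussian

variable {E : Type*} [NormedAddCommGroup E] [InnerProductSpace ℝ E]

lemma norm_iteratedFDeriv_exp_neg_mul_sq_norm_le (a : ℝ) (n : ℕ) :
    ∃ (m : ℕ) (C : ℝ), ∀ x : E,
      ‖iteratedFDeriv ℝ n (fun x => exp (-a * ‖x‖ ^ 2)) x‖ ≤
        C * ((1 + ‖x‖) ^ m * exp (-(a * ‖x‖ ^ 2))) := by
  have hq : (fun x : E => -a * ‖x‖ ^ 2).HasTemperateGrowth :=
    (Function.HasTemperateGrowth.const (-a)).mul (Function.hasTemperateGrowth_norm_sq E)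
  obtain ⟨m, C, -, hC⟩ := hq.norm_iteratedFDeriv_le_uniform n
  refine ⟨m * n, n ! * max 1 C ^ n, fun x => ?_⟩
  -- Faà di Bruno for `exp ∘ (-a ‖·‖²)`; `D` bounds the derivatives of the exponent
  set D := max 1 C * (1 + ‖x‖) ^ m
  have hD1 : 1 ≤ D := one_le_mul_of_one_le_of_one_le (le_max_left _ _)
    (one_le_pow₀ (by linarith [norm_nonneg x]))
  have hD : ∀ i, 1 ≤ i → i ≤ n → ‖iteratedFDeriv ℝ i (fun x : E => -a * ‖x‖ ^ 2) x‖ ≤ D ^ i :=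
    fun i hi hin => (hC i hin x).trans <|
      (mul_le_mul_of_nonneg_right (le_max_right _ _) (by positivity)).trans
      (le_self_pow₀ hD1 (by omega))
  calc _ ≤ n ! * exp (-a * ‖x‖ ^ 2) * D ^ n :=
        norm_iteratedFDeriv_comp_le contDiff_exp hq.1 (by exact_mod_cast le_top) x
          (fun i _ => (norm_iteratedFDeriv_exp i _).le) hD
    _ = _ := by rw [mul_pow, ← pow_mul, neg_mul]; ring

noncomputable def gaussianSchwartz (a : ℝ) (ha : 0 < a) : 𝓢(E, ℝ) where
  toFun x := exp (-a * ‖x‖ ^ 2)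
  smooth' := (contDiff_const.mul (contDiff_norm_sq ℝ)).exp
  decay' k n := by
    obtain ⟨m, C, hC⟩ := norm_iteratedFDeriv_exp_neg_mul_sq_norm_le (E := E) a n
    refine ⟨|C| * (2 + (k + m : ℕ) / a) ^ (k + m), fun x => ?_⟩
    have hk : ‖x‖ ^ k ≤ (1 + ‖x‖) ^ k := by gcongr; linarith
    calc ‖x‖ ^ k * ‖iteratedFDeriv ℝ n (fun x => exp (-a * ‖x‖ ^ 2)) x‖
        ≤ (1 + ‖x‖) ^ k * (|C| * ((1 + ‖x‖) ^ m * exp (-(a * ‖x‖ ^ 2)))) := by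
          gcongr
          exact (hC x).trans (by gcongr; exact le_abs_self C)
      _ = |C| * ((1 + ‖x‖) ^ (k + m) * exp (-(a * ‖x‖ ^ 2))) := by ring
      _ ≤ _ := by
          gcongr
          exact one_add_pow_mul_exp_neg_mul_sq_le ha (norm_nonneg x) _

@[simp]
lemma gaussianSchwartz_apply {a : ℝ} (ha : 0 < a) (x : E) :
    gaussianSchwartz a ha x = exp (-a * ‖x‖ ^ 2) := rfl

end Gaussian

section SchwartzConvolution

variable {E F : Type*} [NormedAddCommGroup E] [NormedSpace ℝ E]
  [NormedAddCommGroup F] [NormedSpace ℝ F]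

lemma SchwartzMap.tendsto_norm_pow_mul_cobounded (g : 𝓢(E, F)) (k : ℕ) :
    Tendsto (fun x => ‖x‖ ^ k * ‖g x‖) (Bornology.cobounded E) (𝓝 0) := by
  set C := SchwartzMap.seminorm ℝ (k + 1) 0 g
  refine squeeze_zero' (Eventually.of_forall fun x => by positivity) ?_
    ((tendsto_const_nhds (x := C)).div_atTop tendsto_norm_cobounded_atTop)
  filter_upwards [tendsto_norm_cobounded_atTop.eventually_gt_atTop 0] with x hx
  rw [le_div_iff₀ hx]
  simpa [pow_succ, mul_right_comm] using g.norm_pow_mul_le_seminorm ℝ (k + 1) x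

variable [FiniteDimensional ℝ E] [MeasurableSpace E] [BorelSpace E] {μ : Measure E}
  {ρ : E → ℝ}

lemma SchwartzMap.convolutionExistsAt (G : 𝓢(E, F)) (hρ : Integrable ρ μ) (x : E) :
    ConvolutionExistsAt ρ G x (lsmul ℝ ℝ) μ :=
  hρ.smul_of_top_left <| memLp_top_of_bound
    (G.continuous.comp (continuous_const.sub continuous_id)).aestronglyMeasurable
    (SchwartzMap.seminorm ℝ 0 0 G) (ae_of_all _ fun _ => G.norm_le_seminorm ℝ _)

lemma SchwartzMap.convolution_sum_apply {ι : Type*} (s : Finset ι) (G : ι → 𝓢(E, F))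
    (hρ : Integrable ρ μ) (x : E) :
    (ρ ⋆[lsmul ℝ ℝ, μ] ⇑(∑ i ∈ s, G i)) x = ∑ i ∈ s, (ρ ⋆[lsmul ℝ ℝ, μ] ⇑(G i)) x := by
  simp only [convolution_lsmul, sum_apply, Finset.smul_sum]
  exact integral_finsetSum _ fun i _ => (G i).convolutionExistsAt hρ x

lemma SchwartzMap.hasFDerivAt_convolution (G : 𝓢(E, F)) (hρ : Integrable ρ μ) (x : E) :
    HasFDerivAt (ρ ⋆[lsmul ℝ ℝ, μ] G) ((ρ ⋆[lsmul ℝ ℝ, μ] fderiv ℝ G) x) x := by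
  have hconv : ρ ⋆[lsmul ℝ ℝ, μ] G = fun x => ∫ t, ρ t • G (x - t) ∂μ :=
    funext fun x => convolution_lsmul
  rw [hconv, convolution_lsmul]
  set G' := SchwartzMap.fderivCLM ℝ E F G
  refine hasFDerivAt_integral_of_dominated_of_fderiv_le
    (F' := fun x t => ρ t • fderiv ℝ G (x - t))
    (bound := fun t => |ρ t| * SchwartzMap.seminorm ℝ 0 0 G') univ_mem
    (Eventually.of_forall fun x => (G.convolutionExistsAt hρ x).aestronglyMeasurable)
    (G.convolutionExistsAt hρ x) (G'.convolutionExistsAt hρ x).aestronglyMeasurable ?_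
    (hρ.abs.mul_const _) ?_
  · refine ae_of_all _ fun t x' _ => ?_
    rw [norm_smul, norm_eq_abs]
    gcongr
    exact G'.norm_le_seminorm ℝ _
  · exact ae_of_all _ fun t x' _ =>
      ((G.hasFDerivAt (x' - t)).comp x' ((hasFDerivAt_id x').sub_const t)).const_smul (ρ t)

lemma SchwartzMap.fderiv_convolution_apply (G : 𝓢(E, F)) (hρ : Integrable ρ μ) (x v : E) :
    fderiv ℝ (ρ ⋆[lsmul ℝ ℝ, μ] G) x v = (ρ ⋆[lsmul ℝ ℝ, μ] ⇑(∂_{v} G : 𝓢(E, F))) x := by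
  have hint : Integrable (fun t => ρ t • fderiv ℝ G (x - t)) μ :=
    (SchwartzMap.fderivCLM ℝ E F G).convolutionExistsAt hρ x
  rw [(G.hasFDerivAt_convolution hρ x).fderiv, convolution_lsmul, convolution_lsmul,
    integral_apply hint]
  simp [SchwartzMap.lineDerivOp_apply_eq_fderiv]

end SchwartzConvolution

section InnerProductSpace

variable {E : Type*} [NormedAddCommGroup E] [InnerProductSpace ℝ E] [FiniteDimensional ℝ E]
  [MeasurableSpace E] [BorelSpace E]

lemma SchwartzMap.sum_fderiv_fderiv_convolution {F : Type*} [NormedAddCommGroup F]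
    [NormedSpace ℝ F] {μ : Measure E} {ρ : E → ℝ} {ι : Type*} [Fintype ι]
    (b : OrthonormalBasis ι ℝ E) (G : 𝓢(E, F)) (hρ : Integrable ρ μ) (x : E) :
    ∑ i, fderiv ℝ (fun y => fderiv ℝ (ρ ⋆[lsmul ℝ ℝ, μ] G) y (b i)) x (b i) =
      (ρ ⋆[lsmul ℝ ℝ, μ] ⇑(Δ G : 𝓢(E, F))) x := by
  simp only [SchwartzMap.fderiv_convolution_apply _ hρ]
  rw [SchwartzMap.laplacian_eq_sum b, SchwartzMap.convolution_sum_apply _ _ hρ]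

lemma SchwartzMap.exists_coe_eq_convolution (f g : 𝓢(E, ℝ)) :
    ∃ h : 𝓢(E, ℝ), ⇑h = f ⋆[lsmul ℝ ℝ] g := by
  -- `SchwartzMap.convolution` is only available for complex-valued functions
  let fC := SchwartzMap.postcompCLM (𝕜 := ℝ) Complex.ofRealCLM f
  let gC := SchwartzMap.postcompCLM (𝕜 := ℝ) Complex.ofRealCLM g
  refine ⟨SchwartzMap.postcompCLM (𝕜 := ℝ) Complex.reCLM
    (SchwartzMap.convolution (mul ℂ ℂ) fC gC), funext fun x => ?_⟩
  rw [postcompCLM_apply, SchwartzMap.convolution_apply, convolution_def, convolution_lsmul]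
  simp [fC, gC, ← Complex.ofReal_mul, integral_complex_ofReal]

end InnerProductSpace

section HeatKernel

variable {E : Type*} [NormedAddCommGroup E] [InnerProductSpace ℝ E]

noncomputable def heatKernel (t : ℝ) (x : E) : ℝ :=
  (2 * π * t) ^ (-(finrank ℝ E : ℝ) / 2) * exp (-‖x‖ ^ 2 / (2 * t))

lemma heatKernel_neg (t : ℝ) (x : E) : heatKernel t (-x) = heatKernel t x := by
  simp [heatKernel]

lemma heatKernel_nonneg {t : ℝ} (ht : 0 ≤ t) (x : E) : 0 ≤ heatKernel t x :=
  mul_nonneg (rpow_nonneg (by positivity) _) (exp_pos _).le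

lemma continuous_heatKernel (t : ℝ) : Continuous (heatKernel (E := E) t) := by
  unfold heatKernel; fun_prop

lemma heatKernel_eq_inv_sqrt_pow_mul {t : ℝ} (ht : 0 < t) (x : E) :
    heatKernel t x = (√t)⁻¹ ^ finrank ℝ E * heatKernel 1 ((√t)⁻¹ • x) := by
  have hst : 0 < √t := sqrt_pos.2 ht
  have hpow : (√t)⁻¹ ^ finrank ℝ E = t ^ (-(finrank ℝ E : ℝ) / 2) := by
    rw [sqrt_eq_rpow, ← rpow_natCast, ← rpow_neg_one, ← rpow_mul ht.le, ← rpow_mul ht.le]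
    congr 1; ring
  rw [hpow, heatKernel, heatKernel, mul_rpow (by positivity) ht.le, norm_smul, norm_inv,
    norm_of_nonneg hst.le, mul_pow, inv_pow, sq_sqrt ht.le]
  field_simp

lemma hasFDerivAt_heatKernel (t : ℝ) (x : E) :
    HasFDerivAt (heatKernel t) ((-(heatKernel t x / t)) • innerSL ℝ x) x := by
  have h := ((((hasFDerivAt_id x).norm_sq).fun_neg.mul_const (2 * t)⁻¹).exp).const_mul
    ((2 * π * t) ^ (-(finrank ℝ E : ℝ) / 2))
  simp only [id, ← div_eq_mul_inv] at h
  refine h.congr_fderiv ?_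
  ext v
  simp only [mul_inv_rev, comp_id, smul_neg, neg_apply, smul_apply, coe_innerSL_apply,
    nsmul_eq_mul, Nat.cast_ofNat, smul_eq_mul, heatKernel, neg_smul, neg_inj]
  ring

lemma hasDerivAt_heatKernel_time {t : ℝ} (ht : 0 < t) (x : E) :
    HasDerivAt (fun s => heatKernel s x)
      ((‖x‖ ^ 2 / t ^ 2 - finrank ℝ E / t) * heatKernel t x / 2) t := by
  set p : ℝ := -(finrank ℝ E : ℝ) / 2
  have hpow : HasDerivAt (fun s => (2 * π * s) ^ p) (2 * π * p * (2 * π * t) ^ (p - 1)) t := by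
    simpa using ((hasDerivAt_id t).const_mul (2 * π)).rpow_const (p := p)
      (Or.inl (by positivity))
  have hexp : HasDerivAt (fun s => exp (-‖x‖ ^ 2 / 2 * s⁻¹))
      (exp (-‖x‖ ^ 2 / 2 * t⁻¹) * (-‖x‖ ^ 2 / 2 * -(t ^ 2)⁻¹)) t :=
    ((hasDerivAt_inv ht.ne').const_mul _).exp
  have h := hpow.mul hexp
  simp only [← div_eq_mul_inv, div_div] at h
  refine h.congr_deriv ?_
  rw [rpow_sub (by positivity), rpow_one]
  simp only [heatKernel, p]
  field_simp
  ring

lemma abs_timeDeriv_heatKernel_le {t : ℝ} (ht : 0 < t) (x : E) :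
    |(‖x‖ ^ 2 / t ^ 2 - finrank ℝ E / t) * heatKernel t x / 2| ≤
      (finrank ℝ E + 2) / (2 * t) * (2 * π * t) ^ (-(finrank ℝ E : ℝ) / 2) := by
  set c := (2 * π * t) ^ (-(finrank ℝ E : ℝ) / 2)
  set y := ‖x‖ ^ 2 / (2 * t)
  have hc : 0 ≤ c := rpow_nonneg (by positivity) _
  have hy : y * exp (-y) ≤ 1 := by
    rw [exp_neg, ← div_eq_mul_inv, div_le_one (exp_pos y)]
    linarith [add_one_le_exp y]
  have hexp : exp (-y) ≤ 1 := exp_le_one_iff.2 (neg_nonpos.2 (by positivity))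
  have hK : heatKernel t x = c * exp (-y) := by simp only [heatKernel, c, y, neg_div]
  have hxy : ‖x‖ ^ 2 / t ^ 2 = 2 / t * y := by simp only [y]; field_simp
  rw [hK, hxy, abs_div, abs_two, div_le_iff₀ two_pos]
  calc |(2 / t * y - finrank ℝ E / t) * (c * exp (-y))|
      ≤ (2 / t * y + finrank ℝ E / t) * (c * exp (-y)) := by
        rw [abs_mul, abs_of_nonneg (by positivity : 0 ≤ c * exp (-y))]
        gcongr
        exact (abs_sub _ _).trans_eq (by rw [abs_of_nonneg (by positivity),
          abs_of_nonneg (by positivity)])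
    _ = c / t * (2 * (y * exp (-y)) + finrank ℝ E * exp (-y)) := by ring
    _ ≤ c / t * (2 * 1 + finrank ℝ E * 1) := by gcongr
    _ = _ := by field_simp; ring

noncomputable def heatKernelSchwartz {t : ℝ} (ht : 0 < t) : 𝓢(E, ℝ) :=
  (2 * π * t) ^ (-(finrank ℝ E : ℝ) / 2) • gaussianSchwartz (1 / (2 * t)) (by positivity)

@[simp]
lemma coe_heatKernelSchwartz {t : ℝ} (ht : 0 < t) :
    ⇑(heatKernelSchwartz (E := E) ht) = heatKernel t := by
  ext x
  simp only [heatKernelSchwartz, smul_apply, gaussianSchwartz_apply, smul_eq_mul, heatKernel]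
  congr 2; ring

lemma lineDerivOp_heatKernelSchwartz {t : ℝ} (ht : 0 < t) (v x : E) :
    ∂_{v} (heatKernelSchwartz (E := E) ht) x = -(heatKernel t x / t) * inner ℝ x v := by
  rw [SchwartzMap.lineDerivOp_apply_eq_fderiv, coe_heatKernelSchwartz,
    (hasFDerivAt_heatKernel t x).fderiv]
  simp

lemma lineDerivOp_lineDerivOp_heatKernelSchwartz {t : ℝ} (ht : 0 < t) (v x : E) :
    ∂_{v} (∂_{v} (heatKernelSchwartz (E := E) ht)) x =
      (inner ℝ x v ^ 2 / t ^ 2 - ‖v‖ ^ 2 / t) * heatKernel t x := by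
  have hK : ⇑(∂_{v} (heatKernelSchwartz (E := E) ht) : 𝓢(E, ℝ)) =
      fun y => -(heatKernel t y / t) * inner ℝ v y :=
    funext fun y => by rw [lineDerivOp_heatKernelSchwartz, real_inner_comm]
  have h := (((hasFDerivAt_heatKernel t x).mul_const t⁻¹).fun_neg).fun_mul
    ((innerSL ℝ v).hasFDerivAt (x := x))
  simp only [innerSL_apply_apply, ← div_eq_mul_inv] at h
  rw [SchwartzMap.lineDerivOp_apply_eq_fderiv, hK, h.fderiv]
  simp only [neg_smul, smul_neg, neg_neg, add_apply, neg_apply, smul_apply, coe_innerSL_apply,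
    inner_self_eq_norm_sq_to_K, ringHom_apply, smul_eq_mul]
  field_simp
  rw [real_inner_comm x v]; ring

variable [FiniteDimensional ℝ E]

lemma laplacian_heatKernelSchwartz {t : ℝ} (ht : 0 < t) (x : E) :
    Δ (heatKernelSchwartz (E := E) ht) x =
      (‖x‖ ^ 2 / t ^ 2 - finrank ℝ E / t) * heatKernel t x := by
  let b := stdOrthonormalBasis ℝ E
  have hsum : ∑ i, inner ℝ x (b i) ^ 2 = ‖x‖ ^ 2 := by
    simpa [← sq, real_inner_comm x] using b.sum_inner_mul_inner x x
  rw [SchwartzMap.laplacian_eq_sum b, sum_apply]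
  simp only [lineDerivOp_lineDerivOp_heatKernelSchwartz, b.norm_eq_one, ← Finset.sum_mul,
    Finset.sum_sub_distrib, ← Finset.sum_div, hsum]
  simp

variable [MeasurableSpace E] [BorelSpace E]

lemma integral_heatKernel {t : ℝ} (ht : 0 < t) : ∫ x : E, heatKernel t x = 1 := by
  have h := GaussianFourier.integral_rexp_neg_mul_sq_norm (V := E) (b := 1 / (2 * t))
    (by positivity)
  simp only [heatKernel, integral_const_mul]
  simp_rw [neg_div, div_eq_inv_mul (‖_‖ ^ 2), ← one_div, neg_mul_eq_neg_mul] at *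
  rw [h, show π / (1 / (2 * t)) = 2 * π * t by field_simp, rpow_neg (by positivity),
    inv_mul_cancel₀ (by positivity)]

end HeatKernel

section HeatSemigroup

variable {E : Type*} [NormedAddCommGroup E] [InnerProductSpace ℝ E] [FiniteDimensional ℝ E]
  [MeasurableSpace E] [BorelSpace E] {f : E → ℝ}

lemma integral_mul_heatKernel_eq_convolution (f : E → ℝ) (t : ℝ) (x : E) :
    ∫ y, f (x + y) * heatKernel t y = (f ⋆[lsmul ℝ ℝ] heatKernel t) x := by
  rw [convolution_lsmul_swap, ← integral_neg_eq_self]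
  simp [heatKernel_neg, sub_eq_add_neg]

lemma hasDerivAt_convolution_heatKernel (hf : Integrable f) {t : ℝ} (ht : 0 < t) (x : E) :
    HasDerivAt (fun s => (f ⋆[lsmul ℝ ℝ] heatKernel s) x)
      ((f ⋆[lsmul ℝ ℝ] ⇑(Δ (heatKernelSchwartz (E := E) ht) : 𝓢(E, ℝ))) x / 2) t := by
  set n : ℝ := (finrank ℝ E : ℝ)
  have hcont : ∀ s, Continuous fun y => heatKernel s (x - y) :=
    fun s => (continuous_heatKernel s).comp (continuous_const.sub continuous_id)
  -- on `s ∈ (t/2, 3t/2)` the time derivative of the kernel is bounded uniformly in `y`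
  have hderiv := hasDerivAt_integral_of_dominated_loc_of_deriv_le (μ := volume)
    (F := fun s y => f y • heatKernel s (x - y))
    (F' := fun s y => f y • ((‖x - y‖ ^ 2 / s ^ 2 - n / s) * heatKernel s (x - y) / 2))
    (bound := fun y => |f y| * ((n + 2) / t * (π * t) ^ (-n / 2)))
    (Metric.ball_mem_nhds t (half_pos ht))
    (Eventually.of_forall fun s => hf.aestronglyMeasurable.smul (hcont s).aestronglyMeasurable)
    (by simpa [ConvolutionExistsAt] using (heatKernelSchwartz ht).convolutionExistsAt hf x)
    (hf.aestronglyMeasurable.smul (by fun_prop))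
    ?_ (hf.abs.mul_const _) ?_
  · simp only [convolution_lsmul, smul_eq_mul] at hderiv ⊢
    refine hderiv.2.congr_deriv ?_
    rw [← integral_div]
    congr 1 with y
    rw [laplacian_heatKernelSchwartz]
    ring
  · refine ae_of_all _ fun y s hs => ?_
    rw [Metric.mem_ball, Real.dist_eq, abs_sub_lt_iff] at hs
    have hs0 : 0 < s := by linarith
    rw [norm_smul, norm_eq_abs]
    gcongr
    refine (abs_timeDeriv_heatKernel_le hs0 _).trans ?_
    gcongr ?_ * ?_
    · exact div_le_div_of_nonneg_left (by positivity) ht (by linarith)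
    · exact rpow_le_rpow_of_nonpos (by positivity) (by nlinarith [pi_pos])
        (by rw [neg_div, neg_nonpos]; positivity)
  · refine ae_of_all _ fun y s hs => ?_
    rw [Metric.mem_ball, Real.dist_eq, abs_sub_lt_iff] at hs
    exact (hasDerivAt_heatKernel_time (by linarith) (x - y)).const_smul (f y)

lemma tendsto_convolution_heatKernel (hf : Integrable f) {x : E} (hfx : ContinuousAt f x) :
    Tendsto (fun t => (f ⋆[lsmul ℝ ℝ] heatKernel t) x) (𝓝[>] 0) (𝓝 (f x)) := by
  have hdecay : Tendsto (fun y : E => ‖y‖ ^ finrank ℝ E * heatKernel 1 y)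
      (Bornology.cobounded E) (𝓝 0) := by
    simpa [norm_of_nonneg (heatKernel_nonneg zero_le_one _)] using
      (heatKernelSchwartz (E := E) one_pos).tendsto_norm_pow_mul_cobounded (finrank ℝ E)
  have hpeak := tendsto_integral_comp_smul_smul_of_integrable' (μ := volume)
    (fun y => heatKernel_nonneg zero_le_one y) (integral_heatKernel one_pos) hdecay hf hfx
  have hsqrt : Tendsto (√·) (𝓝[>] (0 : ℝ)) (𝓝[>] 0) :=
    tendsto_nhdsWithin_iff.2 ⟨(continuous_sqrt.tendsto' 0 0 sqrt_zero).mono_left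
      nhdsWithin_le_nhds, eventually_nhdsWithin_of_forall fun t ht => sqrt_pos.2 ht⟩
  refine (hpeak.comp (tendsto_inv_nhdsGT_zero.comp hsqrt)).congr' ?_
  filter_upwards [self_mem_nhdsWithin] with t ht
  simp only [Function.comp_apply, convolution_lsmul, smul_eq_mul,
    heatKernel_eq_inv_sqrt_pow_mul ht, mul_comm (f _)]

end HeatSemigroup

section Euclidean

lemma List.foldr_iterate_ite_eq {α ι : Type*} [DecidableEq ι] (T : ι → α → α) (i : ι) (n : ℕ)
    (g : α) {l : List ι} (hl : l.Nodup) :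
    l.foldr (fun j h => (T j)^[if j = i then n else 0] h) g =
      (T i)^[if i ∈ l then n else 0] g := by
  induction l with
  | nil => simp
  | cons a l ih =>
    rw [List.foldr_cons, ih hl.of_cons]
    by_cases hai : a = i
    · subst hai
      simp [(List.nodup_cons.1 hl).1]
    · simp [hai, Ne.symm hai]

variable {d : ℕ}

lemma multiDeriv_ite_eq_iterate (i : Fin d) (g : EuclideanSpace ℝ (Fin d) → ℝ) :
    multiDeriv d (fun j => if j = i then 2 else 0) g = (pderiv1 d i)^[2] g := by
  rw [multiDeriv, List.foldr_iterate_ite_eq _ _ _ _ (List.nodup_finRange d),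
    if_pos (List.mem_finRange i)]

lemma SchwartzMap.sum_multiDeriv_convolution {ρ : EuclideanSpace ℝ (Fin d) → ℝ}
    (hρ : Integrable ρ) (G : 𝓢(EuclideanSpace ℝ (Fin d), ℝ)) (x : EuclideanSpace ℝ (Fin d)) :
    ∑ i, multiDeriv d (fun j => if j = i then 2 else 0) (ρ ⋆[lsmul ℝ ℝ] G) x =
      (ρ ⋆[lsmul ℝ ℝ] ⇑(Δ G : 𝓢(EuclideanSpace ℝ (Fin d), ℝ))) x := by
  rw [← G.sum_fderiv_fderiv_convolution (EuclideanSpace.basisFun (Fin d) ℝ) hρ x]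
  refine Finset.sum_congr rfl fun i _ => ?_
  rw [multiDeriv_ite_eq_iterate, EuclideanSpace.basisFun_apply]
  rfl

end Euclidean

theorem heat_equation_schwartz_solution_general (d : ℕ)
    (f : SchwartzMap (EuclideanSpace ℝ (Fin d)) ℝ)
    (u : ℝ → EuclideanSpace ℝ (Fin d) → ℝ)
    (hu : ∀ t : ℝ, 0 < t → ∀ x, u t x =
      ∫ y, f (x + y) *
        ((2 * Real.pi * t) ^ (-(d : ℝ) / 2) * Real.exp (-‖y‖ ^ 2 / (2 * t)))) :
    (∀ t : ℝ, 0 < t → ∃ g : SchwartzMap (EuclideanSpace ℝ (Fin d)) ℝ,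
      ∀ x, g x = u t x) ∧
    (∀ t : ℝ, 0 < t → ∀ x, HasDerivAt (fun s => u s x)
      ((1 / 2) * ∑ i : Fin d,
        multiDeriv d (fun j => if j = i then 2 else 0) (u t) x) t) ∧
    (∀ x, Filter.Tendsto (fun t => u t x)
      (nhdsWithin 0 (Set.Ioi 0)) (nhds (f x))) := by
  have hconv : ∀ t, 0 < t → u t = f ⋆[lsmul ℝ ℝ] heatKernel t := fun t ht =>
    funext fun x => by
      rw [hu t ht x, ← integral_mul_heatKernel_eq_convolution]
      simp [heatKernel]
  refine ⟨fun t ht => ?_, fun t ht x => ?_, fun x => ?_⟩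
  · obtain ⟨g, hg⟩ := f.exists_coe_eq_convolution (heatKernelSchwartz ht)
    exact ⟨g, fun x => by rw [hg, hconv t ht, coe_heatKernelSchwartz]⟩
  · rw [hconv t ht, ← coe_heatKernelSchwartz ht,
      SchwartzMap.sum_multiDeriv_convolution f.integrable]
    refine ((hasDerivAt_convolution_heatKernel f.integrable ht x).congr_of_eventuallyEq ?_)
      |>.congr_deriv (by ring)
    filter_upwards [lt_mem_nhds ht] with s hs
    rw [hconv s hs]
  · refine (tendsto_convolution_heatKernel f.integrable f.continuous.continuousAt).congr' ?_
    filter_upwards [self_mem_nhdsWithin] with t ht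
    rw [hconv t ht]

/-- The Gaussian convolution `u(t,x) = ∫ f(x+y) (2πt)^{-d/2} e^{-|y|²/(2t)} dy`
of a Schwartz initial datum `f` solves the heat equation `∂_t u = (1/2)Δu`:
`u(t,·)` is Schwartz for `t > 0`, `u` is differentiable in `t` on `(0,∞)`
with `∂_t u = (1/2)Δu`, and `u(t,x) → f(x)` as `t → 0⁺`. -/
theorem heat_equation_schwartz_solution (d : ℕ)
    (f : SchwartzMap (EuclideanSpace ℝ (Fin d)) ℝ)
    (u : ℝ → EuclideanSpace ℝ (Fin d) → ℝ)
    (hu : ∀ t : ℝ, 0 < t → ∀ x, u t x =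
      ∫ y, f (x + y) *
        ((2 * Real.pi * t) ^ (-(d : ℝ) / 2) * Real.exp (-‖y‖ ^ 2 / (2 * t))))
    (hu0 : ∀ x, u 0 x = f x) :
    (∀ t : ℝ, 0 < t → ∃ g : SchwartzMap (EuclideanSpace ℝ (Fin d)) ℝ,
      ∀ x, g x = u t x) ∧
    (∀ t : ℝ, 0 < t → ∀ x, HasDerivAt (fun s => u s x)
      ((1 / 2) * ∑ i : Fin d,
        multiDeriv d (fun j => if j = i then 2 else 0) (u t) x) t) ∧
    (∀ x, Filter.Tendsto (fun t => u t x)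
      (nhdsWithin 0 (Set.Ioi 0)) (nhds (f x))) :=
  heat_equation_schwartz_solution_general d f u hu
end
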